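/- arXiv:2404.06805 — 5 statements merged into one kernel-verified Lean document; each statement's English description precedes it below -/
import Mathlib

section
/- Dini's theorem for strongly countably compact spaces: let (M,d) be a strongly countably compact metric space, let F_n : M → ℝ be continuous for each n ∈ ℕ, let F : M → ℝ be continuous, and suppose that for every x ∈ M the sequence (F_n(x))_{n∈ℕ} is monotone increasing and converges to F(x). Then the convergence is uniform: for every ε > 0 there exists N ∈ ℕ such that |F(x) − F_n(x)| < ε for all n ≥ N and all x ∈ M. -/
/-!
A countably compact metric space is sequentially compact, hence compact, so this is the classical
Dini theorem.
-/

open Set Filter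

theorem countablyCompactSpace_of_forall_nat_open_cover {X : Type*} [TopologicalSpace X]
    (h : ∀ O : ℕ → Set X, (∀ n, IsOpen (O n)) → (∀ x : X, ∃ n, x ∈ O n) →
      ∃ m : ℕ, ∀ x : X, ∃ n ≤ m, x ∈ O n) :
    CountablyCompactSpace X := by
  refine ⟨isCountablyCompact_iff_countable_open_cover.2 fun O hO hcover => ?_⟩
  obtain ⟨m, hm⟩ := h O hO fun x => mem_iUnion.1 (hcover (mem_univ x))
  refine ⟨Finset.range (m + 1), fun x _ => ?_⟩
  obtain ⟨n, hnm, hxn⟩ := hm x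
  exact mem_biUnion (Finset.mem_range.2 (Nat.lt_succ_of_le hnm)) hxn

theorem compactSpace_of_countablyCompactSpace {X : Type*} [PseudoMetricSpace X]
    [CountablyCompactSpace X] : CompactSpace X :=
  compactSpace_iff_seqCompactSpace.2 inferInstance

/-- Dini's theorem for strongly countably compact metric spaces. -/
theorem dini_stronglyCountablyCompact {M : Type*} [MetricSpace M]
    (hM : ∀ O : ℕ → Set M, (∀ n, IsOpen (O n)) → (∀ x : M, ∃ n, x ∈ O n) →
      ∃ m : ℕ, ∀ x : M, ∃ n ≤ m, x ∈ O n)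
    (Fn : ℕ → M → ℝ) (F : M → ℝ)
    (hFn : ∀ n, Continuous (Fn n)) (hF : Continuous F)
    (hmono : ∀ x : M, Monotone fun n => Fn n x)
    (hconv : ∀ x : M, Filter.Tendsto (fun n => Fn n x) Filter.atTop (nhds (F x))) :
    ∀ ε > (0 : ℝ), ∃ N : ℕ, ∀ n ≥ N, ∀ x : M, |F x - Fn n x| < ε := by
  intro ε hε
  have := countablyCompactSpace_of_forall_nat_open_cover hM
  have := compactSpace_of_countablyCompactSpace (X := M)
  have hunif : TendstoUniformly Fn F atTop :=
    Monotone.tendstoUniformly_of_forall_tendsto hFn (fun _ _ hmn x => hmono x hmn) hF hconv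
  obtain ⟨N, hN⟩ := eventually_atTop.1 (Metric.tendstoUniformly_iff.1 hunif ε hε)
  exact ⟨N, fun n hn x => by simpa only [Real.dist_eq] using hN n hn x⟩
end

section
/- Let A ⊆ ℝ with 0 ∈ A and let Y : ℝ → ℕ be injective on A. Define d : A × A → ℝ by d(0,0) = 0, d(x,0) = d(0,x) = 1/2^{Y(x)} for x ∈ A with x ≠ 0, and d(x,y) = |1/2^{Y(x)} − 1/2^{Y(y)}| for x, y ∈ A with x ≠ 0 and y ≠ 0. Then d is a metric on A: d(x,y) = 0 iff x = y, d(x,y) = d(y,x) ≥ 0, and d(x,y) ≤ d(x,z) + d(z,y) for all x, y, z ∈ A. -/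
/-!
`d` is the distance of `ℝ` pulled back along the weight `x ↦ 2 ^ (-Y x)` (with `0 ↦ 0`).
This weight is injective on `A`: it is positive off `0`, and `n ↦ 2 ^ (-n)` is injective,
as is `Y` on `A`. A pullback of a metric along an injection is a metric.
-/

open Set

theorem abs_sub_isMetricOn {α : Type*} {s : Set α} {f : α → ℝ} (hf : InjOn f s)
    {d : α → α → ℝ} (hd : ∀ x ∈ s, ∀ y ∈ s, d x y = |f x - f y|) :
    (∀ x ∈ s, ∀ y ∈ s, (d x y = 0 ↔ x = y)) ∧
    (∀ x ∈ s, ∀ y ∈ s, d x y = d y x ∧ 0 ≤ d x y) ∧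
    (∀ x ∈ s, ∀ y ∈ s, ∀ z ∈ s, d x y ≤ d x z + d z y) := by
  refine ⟨fun x hx y hy => ?_, fun x hx y hy => ?_, fun x hx y hy z hz => ?_⟩
  · rw [hd x hx y hy, abs_eq_zero, sub_eq_zero]
    exact hf.eq_iff hx hy
  · rw [hd x hx y hy, hd y hy x hx]
    exact ⟨abs_sub_comm _ _, abs_nonneg _⟩
  · rw [hd x hx y hy, hd x hx z hz, hd z hz y hy]
    exact abs_sub_le _ _ _

noncomputable def dyadicWeight (Y : ℝ → ℕ) (x : ℝ) : ℝ :=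
  if x = 0 then 0 else 1 / 2 ^ Y x

@[simp]
theorem dyadicWeight_zero (Y : ℝ → ℕ) : dyadicWeight Y 0 = 0 := if_pos rfl

theorem dyadicWeight_pos (Y : ℝ → ℕ) {x : ℝ} (hx : x ≠ 0) : 0 < dyadicWeight Y x := by
  rw [dyadicWeight, if_neg hx]
  positivity

theorem injOn_dyadicWeight {A : Set ℝ} {Y : ℝ → ℕ} (hY : ∀ x ∈ A, ∀ y ∈ A, x ≠ y → Y x ≠ Y y) :
    InjOn (dyadicWeight Y) A := by
  intro x hx y hy hxy
  by_contra hne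
  by_cases hx0 : x = 0 <;> by_cases hy0 : y = 0
  · exact hne (hx0.trans hy0.symm)
  · rw [hx0, dyadicWeight_zero] at hxy
    exact (dyadicWeight_pos Y hy0).ne hxy
  · rw [hy0, dyadicWeight_zero] at hxy
    exact (dyadicWeight_pos Y hx0).ne' hxy
  · simp only [dyadicWeight, if_neg hx0, if_neg hy0, ← one_div_pow] at hxy
    exact hY x hx y hy hne (pow_right_injective₀ (by norm_num) (by norm_num) hxy)

theorem metric_of_injection_general (A : Set ℝ) (Y : ℝ → ℕ)
    (hY : ∀ x ∈ A, ∀ y ∈ A, x ≠ y → Y x ≠ Y y)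
    (d : ℝ → ℝ → ℝ)
    (hd00 : d 0 0 = 0)
    (hdx0 : ∀ x ∈ A, x ≠ 0 → d x 0 = 1 / 2 ^ Y x ∧ d 0 x = 1 / 2 ^ Y x)
    (hdxy : ∀ x ∈ A, ∀ y ∈ A, x ≠ 0 → y ≠ 0 →
      d x y = |1 / 2 ^ Y x - 1 / 2 ^ Y y|) :
    (∀ x ∈ A, ∀ y ∈ A, (d x y = 0 ↔ x = y)) ∧
    (∀ x ∈ A, ∀ y ∈ A, d x y = d y x ∧ 0 ≤ d x y) ∧
    (∀ x ∈ A, ∀ y ∈ A, ∀ z ∈ A, d x y ≤ d x z + d z y) := by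
  refine abs_sub_isMetricOn (injOn_dyadicWeight hY) fun x hx y hy => ?_
  rcases eq_or_ne x 0 with rfl | hx0 <;> rcases eq_or_ne y 0 with rfl | hy0
  · simp [hd00]
  · simp [(hdx0 y hy hy0).2, dyadicWeight, hy0]
  · simp [(hdx0 x hx hx0).1, dyadicWeight, hx0]
  · simp [hdxy x hx y hy hx0 hy0, dyadicWeight, hx0, hy0]

/-- The function `d` built from an injection `Y` of `A` into ℕ is a metric on `A`. -/
theorem metric_of_injection (A : Set ℝ) (h0 : (0 : ℝ) ∈ A) (Y : ℝ → ℕ)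
    (hY : ∀ x ∈ A, ∀ y ∈ A, x ≠ y → Y x ≠ Y y)
    (d : ℝ → ℝ → ℝ)
    (hd00 : d 0 0 = 0)
    (hdx0 : ∀ x ∈ A, x ≠ 0 → d x 0 = 1 / 2 ^ Y x ∧ d 0 x = 1 / 2 ^ Y x)
    (hdxy : ∀ x ∈ A, ∀ y ∈ A, x ≠ 0 → y ≠ 0 →
      d x y = |1 / 2 ^ Y x - 1 / 2 ^ Y y|) :
    (∀ x ∈ A, ∀ y ∈ A, (d x y = 0 ↔ x = y)) ∧
    (∀ x ∈ A, ∀ y ∈ A, d x y = d y x ∧ 0 ≤ d x y) ∧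
    (∀ x ∈ A, ∀ y ∈ A, ∀ z ∈ A, d x y ≤ d x z + d z y) :=
  metric_of_injection_general A Y hY d hd00 hdx0 hdxy
end

section
/- Let A ⊆ ℝ with 0 ∈ A, let Y : ℝ → ℕ be injective on A, and define d : A × A → ℝ by d(0,0) = 0, d(x,0) = d(0,x) = 1/2^{Y(x)} for x ∈ A with x ≠ 0, and d(x,y) = |1/2^{Y(x)} − 1/2^{Y(y)}| for x, y ∈ A with x ≠ 0 and y ≠ 0. Then the metric space (A,d) is sequentially compact: every sequence in A has a subsequence that converges with respect to d to a point of A. -/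
/-!
Let `u n = Y (x n)`. If some value of `u` is taken infinitely often, injectivity of `Y` on `A`
makes `x` constant along those indices, which is a convergent subsequence. Otherwise `u` has
finite fibres, hence tends to infinity, and then `d (x n) 0 ≤ (1/2) ^ u n → 0`.
-/

open Filter Topology

theorem Nat.exists_strictMono_const_or_tendsto_atTop (u : ℕ → ℕ) :
    (∃ j, ∃ φ : ℕ → ℕ, StrictMono φ ∧ ∀ n, u (φ n) = j) ∨ Tendsto u atTop atTop := by
  by_cases h : ∃ j, (u ⁻¹' {j}).Infinite
  · obtain ⟨j, hj⟩ := h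
    exact .inl ⟨j, Nat.nth (u · = j), Nat.nth_strictMono hj, Nat.nth_mem_of_infinite hj⟩
  · simp only [not_exists, Set.not_infinite] at h
    have : Tendsto u cofinite cofinite :=
      Tendsto.cofinite_of_finite_preimage_singleton fun j => (h j).to_subtype
    exact .inr (by rwa [Nat.cofinite_eq_atTop] at this)

section InjectionMetric

variable {A : Set ℝ} {Y : ℝ → ℕ} {d : ℝ → ℝ → ℝ}

theorem injectionMetric_self (hd00 : d 0 0 = 0)
    (hdxy : ∀ x ∈ A, ∀ y ∈ A, x ≠ 0 → y ≠ 0 → d x y = |1 / 2 ^ Y x - 1 / 2 ^ Y y|)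
    {v : ℝ} (hv : v ∈ A) : d v v = 0 := by
  by_cases hv0 : v = 0
  · rwa [hv0]
  · rw [hdxy v hv v hv hv0 hv0, sub_self, abs_zero]

theorem injectionMetric_zero_le (hd00 : d 0 0 = 0)
    (hdx0 : ∀ x ∈ A, x ≠ 0 → d x 0 = 1 / 2 ^ Y x) {x : ℝ} (hx : x ∈ A) :
    d x 0 ≤ (1 / 2) ^ Y x := by
  by_cases hx0 : x = 0
  · rw [hx0, hd00]; positivity
  · rw [hdx0 x hx hx0, div_pow, one_pow]

theorem tendsto_injectionMetric_zero (hd00 : d 0 0 = 0)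
    (hdx0 : ∀ x ∈ A, x ≠ 0 → d x 0 = 1 / 2 ^ Y x) {x : ℕ → ℝ} (hx : ∀ n, x n ∈ A)
    (hYx : Tendsto (fun n => Y (x n)) atTop atTop) {ε : ℝ} (hε : 0 < ε) :
    ∀ᶠ n in atTop, d (x n) 0 < ε := by
  have hpow : Tendsto (fun n => ((1 : ℝ) / 2) ^ Y (x n)) atTop (𝓝 0) :=
    (tendsto_pow_atTop_nhds_zero_of_lt_one (by norm_num) (by norm_num)).comp hYx
  filter_upwards [hpow.eventually_lt_const hε] with n hn
  exact (injectionMetric_zero_le hd00 hdx0 (hx n)).trans_lt hn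

end InjectionMetric

/-- The metric space `(A, d)` built from an injection `Y` of `A` into ℕ is
sequentially compact. -/
theorem seqCompact_of_injection_metric (A : Set ℝ) (h0 : (0 : ℝ) ∈ A) (Y : ℝ → ℕ)
    (hY : ∀ x ∈ A, ∀ y ∈ A, x ≠ y → Y x ≠ Y y)
    (d : ℝ → ℝ → ℝ)
    (hd00 : d 0 0 = 0)
    (hdx0 : ∀ x ∈ A, x ≠ 0 → d x 0 = 1 / 2 ^ Y x ∧ d 0 x = 1 / 2 ^ Y x)
    (hdxy : ∀ x ∈ A, ∀ y ∈ A, x ≠ 0 → y ≠ 0 →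
      d x y = |1 / 2 ^ Y x - 1 / 2 ^ Y y|) :
    ∀ x : ℕ → ℝ, (∀ n, x n ∈ A) →
      ∃ w ∈ A, ∃ φ : ℕ → ℕ, StrictMono φ ∧
        ∀ ε > (0 : ℝ), ∃ N : ℕ, ∀ n ≥ N, d (x (φ n)) w < ε := by
  intro x hx
  rcases Nat.exists_strictMono_const_or_tendsto_atTop (fun n => Y (x n)) with
    ⟨j, φ, hφ, hj⟩ | hYx
  · have hconst : ∀ n, x (φ n) = x (φ 0) := fun n => by
      by_contra hne
      exact hY _ (hx _) _ (hx _) hne ((hj n).trans (hj 0).symm)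
    refine ⟨x (φ 0), hx _, φ, hφ, fun ε hε => ⟨0, fun n _ => ?_⟩⟩
    rwa [hconst, injectionMetric_self hd00 hdxy (hx _)]
  · refine ⟨0, h0, id, strictMono_id, fun ε hε => ?_⟩
    exact eventually_atTop.1
      (tendsto_injectionMetric_zero hd00 (fun x hx hx0 => (hdx0 x hx hx0).1) hx hYx hε)
end

section
/- Let A ⊆ ℝ with 0 ∈ A, let Y : ℝ → ℕ be injective on A, and define d : A × A → ℝ by d(0,0) = 0, d(x,0) = d(0,x) = 1/2^{Y(x)} for x ∈ A with x ≠ 0, and d(x,y) = |1/2^{Y(x)} − 1/2^{Y(y)}| for x, y ∈ A with x ≠ 0 and y ≠ 0. Then (A,d) is countably compact: for every sequence (a_n)_{n∈ℕ} in A and every sequence (r_n)_{n∈ℕ} of positive rationals such that A ⊆ ⋃_{n∈ℕ} B_d(a_n, r_n), there exists m ∈ ℕ such that A ⊆ ⋃_{n≤m} B_d(a_n, r_n), where B_d(a,r) = {y ∈ A : d(a,y) < r}. -/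
/-!
Put `w x = 1 / 2 ^ Y x` for `x ≠ 0` and `w 0 = 0`; then `d x y = |w x - w y|` on `A`. Since `Y` is
injective on `A`, only finitely many points of `A` have `w x ≥ ε`, for every `ε > 0`. The ball
containing `0` has some room `ε` to spare, so it swallows every point with `w x < ε`, and finitely
many further balls cover the rest.
-/

open Set

theorem exists_finite_subcover_of_abs_sub {α : Type*} {s : Set α} {f : α → ℝ} {z : α}
    (hz : z ∈ s) (hfin : ∀ ε > 0, {x ∈ s | ε ≤ |f x - f z|}.Finite)
    (a : ℕ → α) (r : ℕ → ℝ) (hcov : ∀ x ∈ s, ∃ n, |f (a n) - f x| < r n) :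
    ∃ m, ∀ x ∈ s, ∃ n ≤ m, |f (a n) - f x| < r n := by
  obtain ⟨N, hN⟩ := hcov z hz
  set ε := r N - |f (a N) - f z|
  have hF := hfin ε (sub_pos.2 hN)
  choose! n hn using hcov
  refine ⟨max N (hF.toFinset.sup n), fun x hx => ?_⟩
  by_cases hfar : ε ≤ |f x - f z|
  · have hxF : x ∈ hF.toFinset := hF.mem_toFinset.2 ⟨hx, hfar⟩
    exact ⟨n x, le_max_of_le_right (Finset.le_sup hxF), hn x hx⟩
  · refine ⟨N, le_max_left _ _, ?_⟩
    calc |f (a N) - f x| ≤ |f (a N) - f z| + |f z - f x| := abs_sub_le _ _ _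
      _ < r N := by rw [abs_sub_comm (f z)]; linarith

theorem finite_setOf_le_one_div_two_pow {α : Type*} {s : Set α} {Y : α → ℕ} (hY : InjOn Y s)
    {ε : ℝ} (hε : 0 < ε) : {x ∈ s | ε ≤ 1 / 2 ^ Y x}.Finite := by
  obtain ⟨K, hK⟩ := exists_pow_lt_of_lt_one hε (by norm_num : (1 / 2 : ℝ) < 1)
  refine Finite.of_finite_image ((finite_Iic K).subset ?_) (hY.mono fun x hx => hx.1)
  rintro _ ⟨x, ⟨-, hx⟩, rfl⟩
  by_contra! hKx
  have : (1 / 2 : ℝ) ^ Y x < ε :=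
    (pow_lt_pow_right_of_lt_one₀ (by norm_num) (by norm_num) (not_le.1 hKx)).trans hK
  rw [div_pow, one_pow] at this
  exact this.not_ge hx

theorem finite_setOf_le_abs_dyadicWeight_sub {A : Set ℝ} {Y : ℝ → ℕ} (hY : InjOn Y A) {ε : ℝ}
    (hε : 0 < ε) : {x ∈ A | ε ≤ |dyadicWeight Y x - dyadicWeight Y 0|}.Finite := by
  refine (finite_setOf_le_one_div_two_pow hY hε).subset fun x ⟨hx, hεx⟩ => ⟨hx, ?_⟩
  by_cases hx0 : x = 0
  · simp [hx0] at hεx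
    linarith
  · simpa [dyadicWeight, hx0] using hεx

theorem eq_abs_dyadicWeight_sub {A : Set ℝ} {Y : ℝ → ℕ} {d : ℝ → ℝ → ℝ} (hd00 : d 0 0 = 0)
    (hdx0 : ∀ x ∈ A, x ≠ 0 → d x 0 = 1 / 2 ^ Y x ∧ d 0 x = 1 / 2 ^ Y x)
    (hdxy : ∀ x ∈ A, ∀ y ∈ A, x ≠ 0 → y ≠ 0 → d x y = |1 / 2 ^ Y x - 1 / 2 ^ Y y|) :
    ∀ x ∈ A, ∀ y ∈ A, d x y = |dyadicWeight Y x - dyadicWeight Y y| := by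
  intro x hx y hy
  by_cases hx0 : x = 0 <;> by_cases hy0 : y = 0
  · simp [hx0, hy0, hd00]
  · simp [dyadicWeight, hx0, hy0, (hdx0 y hy hy0).2]
  · simp [dyadicWeight, hx0, hy0, (hdx0 x hx hx0).1]
  · simp [dyadicWeight, hx0, hy0, hdxy x hx y hy hx0 hy0]

theorem countablyCompact_of_injection_metric_general (A : Set ℝ) (h0 : (0 : ℝ) ∈ A) (Y : ℝ → ℕ)
    (hY : ∀ x ∈ A, ∀ y ∈ A, x ≠ y → Y x ≠ Y y)
    (d : ℝ → ℝ → ℝ)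
    (hd00 : d 0 0 = 0)
    (hdx0 : ∀ x ∈ A, x ≠ 0 → d x 0 = 1 / 2 ^ Y x ∧ d 0 x = 1 / 2 ^ Y x)
    (hdxy : ∀ x ∈ A, ∀ y ∈ A, x ≠ 0 → y ≠ 0 →
      d x y = |1 / 2 ^ Y x - 1 / 2 ^ Y y|)
    (a : ℕ → ℝ) (ha : ∀ n, a n ∈ A)
    (r : ℕ → ℚ)
    (hcov : ∀ x ∈ A, ∃ n : ℕ, d (a n) x < (r n : ℝ)) :
    ∃ m : ℕ, ∀ x ∈ A, ∃ n ≤ m, d (a n) x < (r n : ℝ) := by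
  have hinj : InjOn Y A := fun x hx y hy hxy => by_contra fun hne => hY x hx y hy hne hxy
  have hdw := eq_abs_dyadicWeight_sub hd00 hdx0 hdxy
  obtain ⟨m, hm⟩ := exists_finite_subcover_of_abs_sub h0
    (fun _ => finite_setOf_le_abs_dyadicWeight_sub hinj) a (fun n => r n)
    (fun x hx => (hcov x hx).imp fun n hn => hdw _ (ha n) x hx ▸ hn)
  exact ⟨m, fun x hx => (hm x hx).imp fun n ⟨hnm, hn⟩ => ⟨hnm, hdw _ (ha n) x hx ▸ hn⟩⟩

/-- The metric space `(A, d)` built from an injection `Y` of `A` into ℕ is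
countably compact. -/
theorem countablyCompact_of_injection_metric (A : Set ℝ) (h0 : (0 : ℝ) ∈ A) (Y : ℝ → ℕ)
    (hY : ∀ x ∈ A, ∀ y ∈ A, x ≠ y → Y x ≠ Y y)
    (d : ℝ → ℝ → ℝ)
    (hd00 : d 0 0 = 0)
    (hdx0 : ∀ x ∈ A, x ≠ 0 → d x 0 = 1 / 2 ^ Y x ∧ d 0 x = 1 / 2 ^ Y x)
    (hdxy : ∀ x ∈ A, ∀ y ∈ A, x ≠ 0 → y ≠ 0 →
      d x y = |1 / 2 ^ Y x - 1 / 2 ^ Y y|)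
    (a : ℕ → ℝ) (ha : ∀ n, a n ∈ A)
    (r : ℕ → ℚ) (hr : ∀ n, 0 < r n)
    (hcov : ∀ x ∈ A, ∃ n : ℕ, d (a n) x < (r n : ℝ)) :
    ∃ m : ℕ, ∀ x ∈ A, ∃ n ≤ m, d (a n) x < (r n : ℝ) :=
  countablyCompact_of_injection_metric_general A h0 Y hY d hd00 hdx0 hdxy a ha r hcov
end

section
/- Let A ⊆ ℝ with 0 ∈ A, let Y : ℝ → ℕ be injective on A, and define d : A × A → ℝ by d(0,0) = 0, d(x,0) = d(0,x) = 1/2^{Y(x)} for x ∈ A with x ≠ 0, and d(x,y) = |1/2^{Y(x)} − 1/2^{Y(y)}| for x, y ∈ A with x ≠ 0 and y ≠ 0. If (x_n)_{n∈ℕ} is a sequence in A that is dense in (A,d), i.e. for every x ∈ A and every k ∈ ℕ there exists n ∈ ℕ with d(x, x_n) < 1/2^k, then for every x ∈ A with x ≠ 0 there exists n ∈ ℕ with x = x_n; in particular, A is countable. -/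
lemma one_div_two_pow_succ_le_sub {a b : ℕ} (h : a < b) :
    (1 : ℝ) / 2 ^ (a + 1) ≤ 1 / 2 ^ a - 1 / 2 ^ b := by
  have hb : (1 : ℝ) / 2 ^ b ≤ 1 / 2 ^ (a + 1) := one_div_pow_le_one_div_pow_of_le one_le_two h
  have ha : (1 : ℝ) / 2 ^ a = 2 * (1 / 2 ^ (a + 1)) := by rw [pow_succ]; ring
  linarith

lemma eq_of_abs_one_div_two_pow_sub_lt {a b : ℕ}
    (h : |(1 : ℝ) / 2 ^ a - 1 / 2 ^ b| < 1 / 2 ^ (a + 1)) : a = b := by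
  by_contra hne
  rcases Nat.lt_or_gt_of_ne hne with hab | hba
  · linarith [one_div_two_pow_succ_le_sub hab, le_abs_self ((1 : ℝ) / 2 ^ a - 1 / 2 ^ b)]
  · have hab : (1 : ℝ) / 2 ^ (a + 1) ≤ 1 / 2 ^ (b + 1) :=
      one_div_pow_le_one_div_pow_of_le one_le_two (Nat.succ_le_succ hba.le)
    linarith [one_div_two_pow_succ_le_sub hba, neg_le_abs ((1 : ℝ) / 2 ^ a - 1 / 2 ^ b)]

theorem enumeration_of_separable_injection_metric_general (A : Set ℝ)
    (Y : ℝ → ℕ)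
    (hY : ∀ x ∈ A, ∀ y ∈ A, x ≠ y → Y x ≠ Y y)
    (d : ℝ → ℝ → ℝ)
    (hdx0 : ∀ x ∈ A, x ≠ 0 → d x 0 = 1 / 2 ^ Y x ∧ d 0 x = 1 / 2 ^ Y x)
    (hdxy : ∀ x ∈ A, ∀ y ∈ A, x ≠ 0 → y ≠ 0 →
      d x y = |1 / 2 ^ Y x - 1 / 2 ^ Y y|)
    (x : ℕ → ℝ) (hx : ∀ n, x n ∈ A)
    (hdense : ∀ w ∈ A, ∀ k : ℕ, ∃ n : ℕ, d w (x n) < 1 / 2 ^ k) :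
    (∀ w ∈ A, w ≠ 0 → ∃ n : ℕ, w = x n) ∧ A.Countable := by
  have henum : ∀ w ∈ A, w ≠ 0 → ∃ n : ℕ, w = x n := by
    intro w hw hw0
    -- the ball of radius 2^-(Y w + 1) about `w` contains no other point of `A`
    obtain ⟨n, hn⟩ := hdense w hw (Y w + 1)
    have hxn : x n ≠ 0 := by
      intro hxn
      rw [hxn, (hdx0 w hw hw0).1] at hn
      exact (one_div_pow_lt_one_div_pow_of_lt one_lt_two (Nat.lt_succ_self (Y w))).not_gt hn
    rw [hdxy w hw (x n) (hx n) hw0 hxn] at hn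
    exact ⟨n, by_contra fun hne ↦ hY w hw (x n) (hx n) hne (eq_of_abs_one_div_two_pow_sub_lt hn)⟩
  refine ⟨henum, ((Set.countable_range x).insert 0).mono fun w hw ↦ ?_⟩
  by_cases hw0 : w = 0
  · exact hw0 ▸ Set.mem_insert _ _
  · obtain ⟨n, rfl⟩ := henum w hw hw0
    exact Set.mem_insert_of_mem _ ⟨n, rfl⟩

/-- If the metric space `(A, d)` built from an injection `Y` of `A` into ℕ is
separable via a dense sequence `(x_n)`, then every nonzero element of `A`
occurs in the sequence; in particular `A` is countable. -/
theorem enumeration_of_separable_injection_metric (A : Set ℝ) (h0 : (0 : ℝ) ∈ A)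
    (Y : ℝ → ℕ)
    (hY : ∀ x ∈ A, ∀ y ∈ A, x ≠ y → Y x ≠ Y y)
    (d : ℝ → ℝ → ℝ)
    (hd00 : d 0 0 = 0)
    (hdx0 : ∀ x ∈ A, x ≠ 0 → d x 0 = 1 / 2 ^ Y x ∧ d 0 x = 1 / 2 ^ Y x)
    (hdxy : ∀ x ∈ A, ∀ y ∈ A, x ≠ 0 → y ≠ 0 →
      d x y = |1 / 2 ^ Y x - 1 / 2 ^ Y y|)
    (x : ℕ → ℝ) (hx : ∀ n, x n ∈ A)
    (hdense : ∀ w ∈ A, ∀ k : ℕ, ∃ n : ℕ, d w (x n) < 1 / 2 ^ k) :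
    (∀ w ∈ A, w ≠ 0 → ∃ n : ℕ, w = x n) ∧ A.Countable :=
  enumeration_of_separable_injection_metric_general A Y hY d hdx0 hdxy x hx hdense
end
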